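/- arXiv:1401.6442 — 8 statements merged into one kernel-verified Lean document; each statement's English description precedes it below -/
import Mathlib

section
/- For any integer m and positive integer n, the formal residue (coefficient of y^{-1}) of the formal Laurent series e^{my}/(e^y - 1)^n equals the binomial coefficient \binom{m-1}{n-1}. -/
/-!
With `β = y / (e^y - 1)` (Mathlib's `bernoulliPowerSeries`), we have
`e^{my} / (e^y - 1)^n = y^{-n} e^{my} β^n`, so the residue `r(m, n)` is the coefficient of
`y^{n-1}` in `e^{my} β^n`; in particular `r(m, 1) = 1`.
Splitting `e^{(m+1)y} = e^{my} + e^{my} (e^y - 1)` gives Pascal's rule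
`r(m+1, n+1) = r(m, n+1) + r(m, n)`, so it only remains to see `r(1, n) = 0` for `n ≥ 2`.
This holds because `e^y / (e^y - 1)^n` is the derivative of `(e^y - 1)^{1-n} / (1 - n)`;
in terms of `β` it is the identity `y (β^k)' = k (β^k - e^y β^{k+1})`.
-/

noncomputable def E : LaurentSeries ℚ := HahnSeries.ofPowerSeries ℤ ℚ (PowerSeries.exp ℚ)

open PowerSeries HahnSeries

namespace PowerSeries

theorem coeff_X_mul_derivative {R : Type*} [CommSemiring R] (f : R⟦X⟧) (n : ℕ) :
    coeff n (X * d⁄dX R f) = n * coeff n f := by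
  cases n with
  | zero => simp
  | succ n => rw [coeff_succ_X_mul, coeff_derivative, mul_comm]; push_cast; rfl

variable {A : Type*} [CommRing A] [Algebra ℚ A]

theorem X_mul_derivative_bernoulliPowerSeries :
    X * d⁄dX A (bernoulliPowerSeries A) =
      bernoulliPowerSeries A - exp A * bernoulliPowerSeries A ^ 2 := by
  have h := congrArg (d⁄dX A) (bernoulliPowerSeries_mul_exp_sub_one A)
  rw [Derivation.leibniz, map_sub, derivative_exp, derivative_one, derivative_X, smul_eq_mul,
    smul_eq_mul] at h
  linear_combination bernoulliPowerSeries A * h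
    - d⁄dX A (bernoulliPowerSeries A) * bernoulliPowerSeries_mul_exp_sub_one A

theorem X_mul_derivative_bernoulliPowerSeries_pow (k : ℕ) :
    X * d⁄dX A (bernoulliPowerSeries A ^ k) =
      (k : A⟦X⟧) * (bernoulliPowerSeries A ^ k - exp A * bernoulliPowerSeries A ^ (k + 1)) := by
  induction k with
  | zero => simp
  | succ k ih =>
    rw [pow_succ, Derivation.leibniz, smul_eq_mul, smul_eq_mul]
    push_cast
    linear_combination bernoulliPowerSeries A * ih
      + bernoulliPowerSeries A ^ k * X_mul_derivative_bernoulliPowerSeries (A := A)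

/-- The residue of `e^y / (e^y - 1)^(k+1)` vanishes, being that of a derivative. -/
theorem coeff_exp_mul_bernoulliPowerSeries_pow {k : ℕ} (hk : k ≠ 0) :
    coeff k (exp A * bernoulliPowerSeries A ^ (k + 1)) = 0 := by
  have h := congrArg (coeff k) (X_mul_derivative_bernoulliPowerSeries_pow (A := A) k)
  rw [coeff_X_mul_derivative, ← map_natCast (C (R := A)), coeff_C_mul, map_sub, mul_sub,
    eq_comm, sub_eq_self] at h
  have hunit : IsUnit (k : A) := by
    simpa using (IsUnit.mk0 (k : ℚ) (Nat.cast_ne_zero.mpr hk)).map (algebraMap ℚ A)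
  exact hunit.mul_right_eq_zero.mp h

end PowerSeries

theorem E_zpow (m : ℤ) : E ^ m = ofPowerSeries ℤ ℚ (rescale (m : ℚ) (exp ℚ)) := by
  have hpow (k : ℕ) : E ^ k = ofPowerSeries ℤ ℚ (rescale (k : ℚ) (exp ℚ)) := by
    rw [← exp_pow_eq_rescale_exp, map_pow]; rfl
  obtain ⟨k, rfl | rfl⟩ := m.eq_nat_or_neg
  · exact_mod_cast hpow k
  · rw [zpow_neg, zpow_natCast, hpow, Int.cast_neg, Int.cast_natCast]
    refine inv_eq_of_mul_eq_one_left ?_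
    rw [← map_mul, exp_mul_exp_eq_exp_add, neg_add_cancel, rescale_zero]
    simp

theorem E_sub_one_mul_single_mul_bernoulliPowerSeries :
    (E - 1) * (single (-1) 1 * ofPowerSeries ℤ ℚ (bernoulliPowerSeries ℚ)) = 1 := by
  rw [mul_left_comm, E, ← map_one (ofPowerSeries ℤ ℚ), ← map_sub, ← map_mul,
    mul_comm (exp ℚ - 1), bernoulliPowerSeries_mul_exp_sub_one, ofPowerSeries_X,
    single_mul_single]
  simp

theorem inv_E_sub_one_pow (n : ℕ) :
    ((E - 1) ^ n)⁻¹ =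
      single (-(n : ℤ)) 1 * ofPowerSeries ℤ ℚ (bernoulliPowerSeries ℚ ^ n) := by
  rw [← inv_pow, inv_eq_of_mul_eq_one_right E_sub_one_mul_single_mul_bernoulliPowerSeries,
    mul_pow, single_pow, one_pow, map_pow]
  simp

theorem coeff_E_zpow_mul_inv_E_sub_one_pow (m : ℤ) (n j : ℕ) :
    (E ^ m * ((E - 1) ^ n)⁻¹).coeff ((j : ℤ) - n) =
      coeff j (rescale (m : ℚ) (exp ℚ) * bernoulliPowerSeries ℚ ^ n) := by
  rw [E_zpow, inv_E_sub_one_pow, mul_left_comm, ← map_mul, sub_eq_add_neg,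
    coeff_single_mul_add, one_mul, ofPowerSeries_apply_coeff]

theorem E_ne_zero : E ≠ 0 := ((isUnit_exp ℚ).map (ofPowerSeries ℤ ℚ)).ne_zero

theorem E_sub_one_ne_zero : E - 1 ≠ 0 :=
  left_ne_zero_of_mul_eq_one E_sub_one_mul_single_mul_bernoulliPowerSeries

theorem E_zpow_add_one_mul_inv_E_sub_one_pow_succ (m : ℤ) (n : ℕ) :
    E ^ (m + 1) * ((E - 1) ^ (n + 1))⁻¹ =
      E ^ m * ((E - 1) ^ (n + 1))⁻¹ + E ^ m * ((E - 1) ^ n)⁻¹ := by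
  have := E_sub_one_ne_zero
  rw [zpow_add_one₀ E_ne_zero]
  field_simp
  ring

theorem coeff_E_zpow_mul_inv_E_sub_one_pow_succ (m : ℤ) (k : ℕ) :
    (E ^ m * ((E - 1) ^ (k + 1))⁻¹).coeff (-1) = Ring.choose ((m : ℚ) - 1) k := by
  induction k generalizing m with
  | zero =>
    have h := coeff_E_zpow_mul_inv_E_sub_one_pow m 1 0
    rw [Nat.cast_zero, Nat.cast_one, zero_sub] at h
    rw [zero_add, h, pow_one, coeff_zero_eq_constantCoeff_apply, map_mul,
      ← coeff_zero_eq_constantCoeff_apply, ← coeff_zero_eq_constantCoeff_apply, coeff_rescale,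
      bernoulliPowerSeries, coeff_mk]
    simp
  | succ k ih =>
    set g : ℤ → ℚ := fun m ↦
      (E ^ m * ((E - 1) ^ (k + 2))⁻¹).coeff (-1) - Ring.choose ((m : ℚ) - 1) (k + 1)
    have hg : Function.Periodic g 1 := by
      intro m
      simp only [g]
      have pascal := Ring.choose_succ_succ ((m : ℚ) - 1) k
      rw [sub_add_cancel] at pascal
      rw [E_zpow_add_one_mul_inv_E_sub_one_pow_succ, HahnSeries.coeff_add, ih m, Int.cast_add,
        Int.cast_one, add_sub_cancel_right, pascal]
      ring
    have hg1 : g 1 = 0 := by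
      have h := coeff_E_zpow_mul_inv_E_sub_one_pow 1 (k + 2) (k + 1)
      rw [Int.cast_one, rescale_one, RingHom.id_apply,
        coeff_exp_mul_bernoulliPowerSeries_pow k.succ_ne_zero] at h
      rw [show ((k + 1 : ℕ) : ℤ) - ((k + 2 : ℕ) : ℤ) = -1 by omega] at h
      simp only [g]
      rw [h, Int.cast_one, sub_self, Ring.choose_zero_succ, sub_zero]
    have := hg.int_mul_eq m
    rw [mul_one, ← hg.eq, hg1] at this
    exact sub_eq_zero.mp this

/-- For any `m : ℤ` and `n > 0`, the formal residue (coefficient of `y⁻¹`) of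
`e^{my}/(e^y-1)^n` equals the generalized binomial coefficient `(m-1).choose (n-1)`,
i.e. `(m-1)(m-2)⋯(m-n+1)/(n-1)!`. -/
theorem stmt2 (m : ℤ) (n : ℕ) (hn : 0 < n) :
    ((E ^ m) * ((E - 1) ^ (n : ℤ))⁻¹).coeff (-1)
      = Ring.choose ((m : ℚ) - 1) (n - 1) := by
  obtain ⟨k, rfl⟩ := Nat.exists_eq_add_one_of_ne_zero hn.ne'
  rw [zpow_natCast, coeff_E_zpow_mul_inv_E_sub_one_pow_succ, Nat.add_sub_cancel]
end

section
/- Define Bernoulli-type numbers q^{(m,n)}_{-n+j} for m, n \in \mathbb{Z}, j \geq 0 by the Laurent expansion e^{mx}/(e^x-1)^n = \sum_{j \geq 0} q^{(m,n)}_{-n+j} x^{-n+j}. Then for all m, n \in \mathbb{Z} and all k \in \mathbb{Z}: q^{(1,1)}_{-m-n-1} = \sum_{k=m}^{-n} q^{(1,k+1)}_{-m-1} q^{(1,-k+1)}_{-n-1}, where the sum is finite because q^{(1,k+1)}_{-m-1} = 0 for k < m and q^{(1,-k+1)}_{-n-1} = 0 for k > -n. -/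
/-- `q n k` is the Bernoulli-type number `q^{(1,n)}_k`, the coefficient of `x^k` in the
formal Laurent expansion of `e^x/(e^x-1)^n`. -/
noncomputable def q (n k : ℤ) : ℚ := (E * ((E - 1) ^ n)⁻¹).coeff k

open PowerSeries

namespace BernoulliResidue

local notation "B" => bernoulliPowerSeries ℚ

lemma constantCoeff_bernoulliPowerSeries : constantCoeff B = 1 := by
  simp [bernoulliPowerSeries, ← coeff_zero_eq_constantCoeff_apply]

noncomputable def bernoulliUnit : ℚ⟦X⟧ˣ :=
  (isUnit_iff_constantCoeff.mpr (constantCoeff_bernoulliPowerSeries ▸ isUnit_one) : IsUnit B).unit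

lemma val_bernoulliUnit : (bernoulliUnit : ℚ⟦X⟧) = B := rfl

noncomputable def bernoulliZPow (k : ℤ) : ℚ⟦X⟧ := ↑(bernoulliUnit ^ k)

lemma bernoulliZPow_add (a b : ℤ) : bernoulliZPow (a + b) = bernoulliZPow a * bernoulliZPow b := by
  rw [bernoulliZPow, zpow_add, Units.val_mul, bernoulliZPow, bernoulliZPow]

lemma bernoulliZPow_natCast (n : ℕ) : bernoulliZPow n = B ^ n := by
  rw [bernoulliZPow, zpow_natCast, Units.val_pow_eq_pow_val, val_bernoulliUnit]

lemma X_mul_derivative_bernoulliPowerSeries : X * d⁄dX ℚ B = B - exp ℚ * B ^ 2 := by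
  have h := bernoulliPowerSeries_mul_exp_sub_one ℚ
  have hd := congrArg (d⁄dX ℚ) h
  simp only [Derivation.leibniz, map_sub, Derivation.map_one_eq_zero, derivative_exp,
    derivative_X, smul_eq_mul, sub_zero] at hd
  linear_combination B * hd - d⁄dX ℚ B * h

lemma coeff_exp_mul_bernoulliPowerSeries_pow (j : ℕ) :
    coeff j (exp ℚ * B ^ (j + 1)) = if j = 0 then 1 else 0 := by
  rcases j with _ | i
  · simp [coeff_zero_eq_constantCoeff_apply, constantCoeff_bernoulliPowerSeries]
  · have key : X * d⁄dX ℚ (B ^ (i + 1)) = (i + 1) • (B ^ (i + 1) - exp ℚ * B ^ (i + 2)) := by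
      simp only [Derivation.leibniz_pow, Nat.add_sub_cancel, smul_eq_mul, nsmul_eq_mul]
      linear_combination ((i + 1 : ℕ) : ℚ⟦X⟧) * B ^ i * X_mul_derivative_bernoulliPowerSeries
    have := congrArg (coeff (i + 1)) key
    rw [coeff_succ_X_mul, coeff_derivative, map_nsmul, map_sub, nsmul_eq_mul] at this
    push_cast at this
    have hi : (i + 1 : ℚ) * coeff (i + 1) (exp ℚ * B ^ (i + 2)) = 0 := by linear_combination this
    simpa [(by positivity : (i + 1 : ℚ) ≠ 0)] using hi

lemma exp_mul_bernoulliPowerSeries_pow_mul_subst (G : ℚ⟦X⟧) (j : ℕ) :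
    exp ℚ * B ^ (j + 1) * G.subst (exp ℚ - 1) = C (constantCoeff G) * (exp ℚ * B ^ (j + 1)) +
      X * (exp ℚ * B ^ j * (mk fun p => coeff (p + 1) G).subst (exp ℚ - 1)) := by
  conv_lhs => rw [eq_X_mul_shift_add_const G]
  rw [subst_add HasSubst.exp_sub_one, subst_mul HasSubst.exp_sub_one,
    subst_X HasSubst.exp_sub_one, subst_C]
  change _ * (_ * _ + C _) = _
  linear_combination exp ℚ * B ^ j * (mk fun p => coeff (p + 1) G).subst (exp ℚ - 1) *
    bernoulliPowerSeries_mul_exp_sub_one ℚ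

theorem coeff_exp_mul_bernoulliPowerSeries_pow_mul_subst (G : ℚ⟦X⟧) (j : ℕ) :
    coeff j (exp ℚ * B ^ (j + 1) * G.subst (exp ℚ - 1)) = coeff j G := by
  induction j generalizing G with
  | zero =>
    rw [exp_mul_bernoulliPowerSeries_pow_mul_subst, map_add, coeff_C_mul,
      coeff_exp_mul_bernoulliPowerSeries_pow]
    simp
  | succ i ih =>
    rw [exp_mul_bernoulliPowerSeries_pow_mul_subst, map_add, coeff_C_mul,
      coeff_exp_mul_bernoulliPowerSeries_pow, coeff_succ_X_mul, ih]
    simp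

lemma constantCoeff_exp_sub_one : constantCoeff (exp ℚ - 1) = 0 := by simp

lemma isUnit_coeff_one_exp_sub_one : IsUnit (coeff 1 (exp ℚ - 1)) := by simp

noncomputable def expSubOneInv : ℚ⟦X⟧ :=
  (exp ℚ - 1).substInvOfIsUnit isUnit_coeff_one_exp_sub_one

lemma hasSubst_expSubOneInv : HasSubst expSubOneInv := HasSubst.substInvOfIsUnit _ _

lemma subst_subst_expSubOneInv (G : ℚ⟦X⟧) :
    PowerSeries.subst (exp ℚ - 1 : ℚ⟦X⟧) (G.subst expSubOneInv) = G := by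
  rw [subst_comp_subst_apply hasSubst_expSubOneInv HasSubst.exp_sub_one, expSubOneInv,
    subst_substInvOfIsUnit_left _ constantCoeff_exp_sub_one, X_subst]

/-- `(x/t)^μ` as a power series in `t`, where `x = expSubOneInv t = log(1 + t)`. -/
noncomputable def logRatioZPow (μ : ℤ) : ℚ⟦X⟧ := (bernoulliZPow μ).subst expSubOneInv

lemma logRatioZPow_add (m n : ℤ) : logRatioZPow (m + n) = logRatioZPow m * logRatioZPow n := by
  rw [logRatioZPow, bernoulliZPow_add, subst_mul hasSubst_expSubOneInv, logRatioZPow,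
    logRatioZPow]

lemma coeff_logRatioZPow (μ : ℤ) (j : ℕ) :
    coeff j (logRatioZPow μ) = coeff j (exp ℚ * bernoulliZPow (μ + j + 1)) := by
  rw [← coeff_exp_mul_bernoulliPowerSeries_pow_mul_subst, logRatioZPow, subst_subst_expSubOneInv,
    add_assoc, bernoulliZPow_add, ← Nat.cast_add_one, bernoulliZPow_natCast]
  ac_rfl

lemma ofPowerSeries_zpow {K : Type*} [Field K] (u : K⟦X⟧ˣ) (k : ℤ) :
    HahnSeries.ofPowerSeries ℤ K u ^ k = HahnSeries.ofPowerSeries ℤ K ↑(u ^ k) := by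
  change (Units.map (HahnSeries.ofPowerSeries ℤ K).toMonoidHom u : LaurentSeries K) ^ k = _
  rw [← Units.val_zpow_eq_zpow_val, ← map_zpow]
  rfl

lemma inv_E_sub_one :
    (E - 1)⁻¹ = HahnSeries.single (-1) 1 * HahnSeries.ofPowerSeries ℤ ℚ B := by
  refine inv_eq_of_mul_eq_one_right ?_
  have h : E - 1 = HahnSeries.ofPowerSeries ℤ ℚ (exp ℚ - 1) := by simp [E]
  rw [h, mul_left_comm, ← map_mul, mul_comm (exp ℚ - 1), bernoulliPowerSeries_mul_exp_sub_one,
    HahnSeries.ofPowerSeries_X, HahnSeries.single_mul_single]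
  simp

lemma E_mul_inv_E_sub_one_zpow (k : ℤ) :
    E * ((E - 1) ^ k)⁻¹ =
      HahnSeries.single (-k) 1 * HahnSeries.ofPowerSeries ℤ ℚ (exp ℚ * bernoulliZPow k) := by
  rw [← inv_zpow, inv_E_sub_one, mul_zpow, ← val_bernoulliUnit, ofPowerSeries_zpow,
    ← bernoulliZPow, RatFunc.single_zpow (-1), ← zpow_mul, neg_one_mul, ← RatFunc.single_zpow,
    map_mul, E]
  ring

lemma q_eq_coeff (k : ℤ) (i : ℕ) : q k (i - k) = coeff i (exp ℚ * bernoulliZPow k) := by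
  rw [q, E_mul_inv_E_sub_one_zpow, sub_eq_add_neg, HahnSeries.coeff_single_mul_add, one_mul,
    HahnSeries.ofPowerSeries_apply_coeff]

lemma q_eq_zero {k c : ℤ} (h : c + k < 0) : q k c = 0 := by
  rw [q, E_mul_inv_E_sub_one_zpow, ← add_neg_cancel_right c k, HahnSeries.coeff_single_mul_add,
    one_mul, PowerSeries.coeff_coe, if_pos h]

lemma q_eq_coeff_logRatioZPow (μ : ℤ) (i : ℕ) :
    q (μ + i + 1) (-μ - 1) = coeff i (logRatioZPow μ) := by
  rw [coeff_logRatioZPow, ← q_eq_coeff]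
  congr 1
  ring

end BernoulliResidue

open BernoulliResidue in
/-- For all `m n : ℤ`,
`q^{(1,1)}_{-m-n-1} = ∑_{k=m}^{-n} q^{(1,k+1)}_{-m-1} q^{(1,-k+1)}_{-n-1}`,
the sum being finite since `q^{(1,k+1)}_{-m-1} = 0` for `k < m` and
`q^{(1,-k+1)}_{-n-1} = 0` for `k > -n`. -/
theorem stmt5 (m n : ℤ) :
    q 1 (-m - n - 1) = (∑ k ∈ Finset.Icc m (-n), q (k + 1) (-m - 1) * q (-k + 1) (-n - 1)) ∧
    (∀ k : ℤ, k < m → q (k + 1) (-m - 1) = 0) ∧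
    (∀ k : ℤ, -n < k → q (-k + 1) (-n - 1) = 0) := by
  refine ⟨?_, fun k hk => q_eq_zero (by omega), fun k hk => q_eq_zero (by omega)⟩
  obtain hmn | hmn := lt_or_ge 0 (m + n)
  · rw [Finset.Icc_eq_empty (by omega), Finset.sum_empty, q_eq_zero (by omega)]
  obtain ⟨N, hN⟩ : ∃ N : ℕ, (N : ℤ) = -m - n := ⟨(-m - n).toNat, by omega⟩
  have hq := q_eq_coeff_logRatioZPow (m + n) N
  rw [show m + n + N + 1 = 1 by omega, show -(m + n) - 1 = -m - n - 1 by ring] at hq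
  rw [hq, logRatioZPow_add, coeff_mul, Finset.Nat.sum_antidiagonal_eq_sum_range_succ_mk,
    Int.Icc_eq_finset_map, Finset.sum_map, show (-n + 1 - m).toNat = N + 1 by omega]
  refine Finset.sum_congr rfl fun i hi => ?_
  have hiN : i ≤ N := Nat.lt_succ_iff.mp (Finset.mem_range.mp hi)
  rw [← q_eq_coeff_logRatioZPow, ← q_eq_coeff_logRatioZPow]
  simp only [Function.Embedding.trans_apply, Nat.castEmbedding_apply, addLeftEmbedding_apply]
  congr 2
  omega
end

section
/- The coefficient of x^{-n+1} in the formal Laurent expansion of e^x/(e^x-1)^n equals -(n-2)/2, for every integer n. -/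
/-!
Write `e^x - 1 = x·u` with `u = 1 + x/2 + ⋯` a unit of `ℚ⟦X⟧`. Then
`e^x/(e^x - 1)^n = x^{-n} · e^x · u^{-n}`, so the wanted coefficient is the linear coefficient of
`e^x · u^{-n}`, namely `1 - n/2`: for a series with constant term `1`, the linear coefficient of
its `n`-th power is `n` times its own, for every `n : ℤ`.
-/

open PowerSeries HahnSeries

namespace PowerSeries

theorem constantCoeff_units_zpow {R : Type*} [Semiring R] {u : R⟦X⟧ˣ}
    (hu : constantCoeff (u : R⟦X⟧) = 1) (n : ℤ) :
    constantCoeff ((u ^ n : R⟦X⟧ˣ) : R⟦X⟧) = 1 := by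
  have hu' : Units.map (constantCoeff (R := R)).toMonoidHom u = 1 := Units.ext hu
  have h := congrArg Units.val (map_zpow (Units.map (constantCoeff (R := R)).toMonoidHom) u n)
  rwa [hu', one_zpow, Units.val_one] at h

variable {R : Type*} [CommRing R]

theorem coeff_one_units_inv {u : R⟦X⟧ˣ} (hu : constantCoeff (u : R⟦X⟧) = 1) :
    coeff 1 ((u⁻¹ : R⟦X⟧ˣ) : R⟦X⟧) = -coeff 1 (u : R⟦X⟧) := by
  have h := congrArg (coeff 1) u.mul_inv
  rw [coeff_one_mul, hu, ← zpow_neg_one, constantCoeff_units_zpow hu] at h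
  simpa [eq_neg_iff_add_eq_zero, add_comm] using h

theorem coeff_one_units_zpow {u : R⟦X⟧ˣ} (hu : constantCoeff (u : R⟦X⟧) = 1) (n : ℤ) :
    coeff 1 ((u ^ n : R⟦X⟧ˣ) : R⟦X⟧) = n * coeff 1 (u : R⟦X⟧) := by
  cases n with
  | ofNat m => simp [coeff_one_pow, hu]
  | negSucc m =>
    have hpow : constantCoeff ((u ^ (m + 1) : R⟦X⟧ˣ) : R⟦X⟧) = 1 := by simp [hu]
    rw [zpow_negSucc, coeff_one_units_inv hpow, Units.val_pow_eq_pow_val, coeff_one_pow, hu]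
    simp only [one_pow, mul_one, Int.cast_negSucc]
    push_cast
    ring

end PowerSeries

namespace HahnSeries

theorem ofPowerSeries_units_zpow {K : Type*} [Field K] (u : K⟦X⟧ˣ) (n : ℤ) :
    ofPowerSeries ℤ K ((u ^ n : K⟦X⟧ˣ) : K⟦X⟧) = ofPowerSeries ℤ K u ^ n := by
  have h := congrArg Units.val (map_zpow (Units.map (ofPowerSeries ℤ K).toMonoidHom) u n)
  rwa [Units.val_zpow_eq_zpow_val] at h

theorem ofPowerSeries_sub_C_constantCoeff {R : Type*} [Ring R] (φ : R⟦X⟧) :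
    ofPowerSeries ℤ R φ - C (constantCoeff φ) =
      single 1 1 * ofPowerSeries ℤ R (PowerSeries.mk fun p ↦ PowerSeries.coeff (p + 1) φ) := by
  rw [← ofPowerSeries_X, ← map_mul, ← sub_const_eq_X_mul_shift, map_sub, ofPowerSeries_C]

theorem coeff_single_mul_ofPowerSeries {R : Type*} [Semiring R] (φ : R⟦X⟧) (a : ℤ) (k : ℕ) :
    (single a 1 * ofPowerSeries ℤ R φ).coeff (a + k) = PowerSeries.coeff k φ := by
  rw [add_comm, coeff_single_mul_add, ofPowerSeries_apply_coeff, one_mul]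

end HahnSeries

noncomputable def expSubOneDivX : ℚ⟦X⟧ˣ :=
  (isUnit_iff_constantCoeff (φ := PowerSeries.mk fun p ↦ coeff (p + 1) (exp ℚ)).mpr
    (by simp)).unit

theorem coe_expSubOneDivX :
    (expSubOneDivX : ℚ⟦X⟧) = PowerSeries.mk fun p ↦ coeff (p + 1) (exp ℚ) := rfl

theorem constantCoeff_expSubOneDivX : constantCoeff (expSubOneDivX : ℚ⟦X⟧) = 1 := by
  simp [coe_expSubOneDivX, coeff_exp]

theorem coeff_one_expSubOneDivX : coeff 1 (expSubOneDivX : ℚ⟦X⟧) = 1 / 2 := by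
  simp [coe_expSubOneDivX, coeff_exp]

theorem E_sub_one_zpow (n : ℤ) :
    (E - 1) ^ n = single n 1 * ofPowerSeries ℤ ℚ (expSubOneDivX ^ n : ℚ⟦X⟧ˣ) := by
  have h : E - 1 = single 1 1 * ofPowerSeries ℤ ℚ expSubOneDivX := by
    have hshift := ofPowerSeries_sub_C_constantCoeff (exp ℚ)
    rwa [constantCoeff_exp, map_one, ← coe_expSubOneDivX] at hshift
  rw [h, mul_zpow, ← RatFunc.single_zpow, ofPowerSeries_units_zpow]

/-- The coefficient of `x^{-n+1}` in `e^x/(e^x-1)^n` is `-(n-2)/2`. -/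
theorem stmt7 (n : ℤ) : q n (-n + 1) = -((n : ℚ) - 2) / 2 := by
  have hseries : E * ((E - 1) ^ n)⁻¹ =
      single (-n) 1 * ofPowerSeries ℤ ℚ (exp ℚ * ((expSubOneDivX ^ (-n) : ℚ⟦X⟧ˣ) : ℚ⟦X⟧)) := by
    rw [← zpow_neg, E_sub_one_zpow, E, map_mul]
    ring
  have hlinear :
      PowerSeries.coeff 1 (exp ℚ * ((expSubOneDivX ^ (-n) : ℚ⟦X⟧ˣ) : ℚ⟦X⟧)) = 1 - n / 2 := by
    rw [coeff_one_mul, coeff_one_units_zpow constantCoeff_expSubOneDivX,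
      constantCoeff_units_zpow constantCoeff_expSubOneDivX, coeff_one_expSubOneDivX, coeff_exp,
      constantCoeff_exp]
    norm_num
    ring
  rw [q, hseries, show -n + 1 = -n + ((1 : ℕ) : ℤ) by simp, coeff_single_mul_ofPowerSeries,
    hlinear]
  ring
end

section
/- For each fixed j \geq 0, the coefficient q^{(1,n)}_{-n+j} of x^{-n+j} in the formal Laurent expansion of e^x/(e^x-1)^n is given by a polynomial in n of degree at most j; that is, there exists a polynomial P_j \in \mathbb{Q}[t] with \deg P_j \leq j such that q^{(1,n)}_{-n+j} = P_j(n) for all n \in \mathbb{Z}. -/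
section IntPolyFun

open Polynomial

-- As a submodule, closure under the linear combinations that occur below comes for free.
noncomputable def intPolyFunLE (R : Type*) [CommRing R] (j : ℕ) : Submodule R (ℤ → R) :=
  (degreeLE R j).map (LinearMap.pi fun n : ℤ => leval (n : R))

variable {R : Type*} [CommRing R]

theorem mem_intPolyFunLE {j : ℕ} {f : ℤ → R} :
    f ∈ intPolyFunLE R j ↔ ∃ P : R[X], P.degree ≤ j ∧ ∀ n : ℤ, f n = P.eval (n : R) := by
  simp only [intPolyFunLE, Submodule.mem_map, mem_degreeLE, funext_iff, LinearMap.pi_apply,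
    leval_apply]
  exact exists_congr fun P => and_congr_right fun _ => forall_congr' fun n => eq_comm

theorem intPolyFunLE_mono {i j : ℕ} (h : i ≤ j) : intPolyFunLE R i ≤ intPolyFunLE R j :=
  Submodule.map_mono (degreeLE_mono (by exact_mod_cast h))

theorem ringChoose_mem_intPolyFunLE {K : Type*} [Field K] [CharZero K] (k : ℕ) :
    (fun n : ℤ => Ring.choose (n : K) k) ∈ intPolyFunLE K k := by
  refine mem_intPolyFunLE.mpr ⟨C (k.factorial : K)⁻¹ * descPochhammer K k, ?_, fun n => ?_⟩
  · grw [degree_mul_le, degree_C_le, degree_le_natDegree, descPochhammer_natDegree, zero_add]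
  · rw [Ring.choose_eq_smul, eval_mul, eval_C, smul_eq_mul, ← aeval_eq_smeval, aeval_def,
      algebraMap_int_eq, ← eval_map, descPochhammer_map]

end IntPolyFun

namespace PowerSeries

theorem coeff_mul_subst_eq_sum {R : Type*} [CommRing R] {w : R⟦X⟧} (hw : constantCoeff w = 0)
    (b f : R⟦X⟧) (j : ℕ) :
    coeff j (b * f.subst w) = ∑ k ∈ Finset.range (j + 1), coeff k f * coeff j (b * w ^ k) := by
  have hsubst : HasSubst w := HasSubst.of_constantCoeff_zero' hw
  obtain ⟨w', rfl⟩ := X_dvd_iff.mpr hw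
  have htail (g : R⟦X⟧) : coeff j (b * (X ^ (j + 1) * g).subst (X * w')) = 0 := by
    rw [subst_mul hsubst, subst_pow hsubst, subst_X hsubst, mul_pow, mul_assoc, mul_left_comm,
      coeff_X_pow_mul', if_neg (by omega)]
  conv_lhs => rw [eq_X_pow_mul_shift_add_trunc (j + 1) f]
  rw [subst_add hsubst, mul_add, map_add, htail, zero_add, subst_coe hsubst,
    Polynomial.aeval_eq_sum_range' (natDegree_trunc_lt f j), Finset.mul_sum, map_sum]
  refine Finset.sum_congr rfl fun k hk => ?_
  rw [coeff_trunc, if_pos (Finset.mem_range.mp hk), mul_smul_comm, map_smul, smul_eq_mul]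

variable {K : Type*} [Field K] [CharZero K]

theorem val_zpow_eq_subst_binomialSeries (a : K⟦X⟧ˣ) (ha : constantCoeff (a : K⟦X⟧) = 1)
    (n : ℤ) : ((a ^ n : K⟦X⟧ˣ) : K⟦X⟧) = (binomialSeries K (n : K)).subst ((a : K⟦X⟧) - 1) := by
  have hsubst : HasSubst ((a : K⟦X⟧) - 1) :=
    HasSubst.of_constantCoeff_zero' (by rw [map_sub, ha, map_one, sub_self])
  have hone : (binomialSeries K (1 : K)).subst ((a : K⟦X⟧) - 1) = (a : K⟦X⟧) := by
    simpa [← coe_substAlgHom hsubst, substAlgHom_X] using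
      congrArg (substAlgHom hsubst) (binomialSeries_nat (A := K) (R := K) 1)
  induction n using Int.induction_on with
  | zero => simp [← coe_substAlgHom hsubst]
  | succ k ih =>
    rw [zpow_add_one, Units.val_mul, ih, Int.cast_add, Int.cast_one, binomialSeries_add,
      subst_mul hsubst, hone]
  | pred k ih =>
    have h : (binomialSeries K ((-k - 1 : ℤ) : K)).subst ((a : K⟦X⟧) - 1) *
        (binomialSeries K (1 : K)).subst ((a : K⟦X⟧) - 1) =
        (binomialSeries K ((-k : ℤ) : K)).subst ((a : K⟦X⟧) - 1) := by
      rw [← subst_mul hsubst, ← binomialSeries_add]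
      congr 2
      push_cast
      ring
    rw [hone, ← ih] at h
    rw [zpow_sub_one, Units.val_mul, ← h, mul_assoc, Units.mul_inv, mul_one]

theorem coeff_mul_zpow_mem_intPolyFunLE (b : K⟦X⟧) (a : K⟦X⟧ˣ)
    (ha : constantCoeff (a : K⟦X⟧) = 1) (j : ℕ) :
    (fun n : ℤ => coeff j (b * ((a ^ n : K⟦X⟧ˣ) : K⟦X⟧))) ∈ intPolyFunLE K j := by
  have hw : constantCoeff ((a : K⟦X⟧) - 1) = 0 := by rw [map_sub, ha, map_one, sub_self]
  have hsum : (fun n : ℤ => coeff j (b * ((a ^ n : K⟦X⟧ˣ) : K⟦X⟧))) =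
      ∑ k ∈ Finset.range (j + 1),
        coeff j (b * ((a : K⟦X⟧) - 1) ^ k) • fun n : ℤ => Ring.choose (n : K) k := by
    funext n
    simp only [val_zpow_eq_subst_binomialSeries a ha, coeff_mul_subst_eq_sum hw,
      binomialSeries_coeff, smul_eq_mul, mul_one, Finset.sum_apply, Pi.smul_apply]
    exact Finset.sum_congr rfl fun k _ => mul_comm _ _
  rw [hsum]
  refine Submodule.sum_mem _ fun k hk => Submodule.smul_mem _ _ ?_
  exact intPolyFunLE_mono (Nat.lt_succ_iff.mp (Finset.mem_range.mp hk))
    (ringChoose_mem_intPolyFunLE k)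

end PowerSeries

open PowerSeries HahnSeries in
theorem LaurentSeries.coeff_ofPowerSeries_mul_inv_zpow_X_mul {K : Type*} [Field K] (f : K⟦X⟧)
    (u : K⟦X⟧ˣ) (n : ℤ) (j : ℕ) :
    (ofPowerSeries ℤ K f * (ofPowerSeries ℤ K (X * (u : K⟦X⟧)) ^ n)⁻¹).coeff (-n + j) =
      coeff j (f * ((u⁻¹ ^ n : K⟦X⟧ˣ) : K⟦X⟧)) := by
  have hu : (ofPowerSeries ℤ K u ^ n)⁻¹ = ofPowerSeries ℤ K ((u⁻¹ ^ n : K⟦X⟧ˣ) : K⟦X⟧) := by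
    change _ = ((Units.map (ofPowerSeries ℤ K : K⟦X⟧ →* LaurentSeries K) (u⁻¹ ^ n) :
      (LaurentSeries K)ˣ) : LaurentSeries K)
    rw [map_zpow, map_inv, inv_zpow', Units.val_zpow_eq_zpow_val, zpow_neg]
    rfl
  rw [map_mul, ofPowerSeries_X, mul_zpow, mul_inv, hu, ← RatFunc.single_zpow, inv_single, inv_one,
    mul_left_comm, ← map_mul, add_comm, coeff_single_mul_add, one_mul, ofPowerSeries_apply_coeff]

open PowerSeries in
/-- For each fixed `j ≥ 0` there is a polynomial `P_j ∈ ℚ[t]` of degree at most `j` such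
that `q^{(1,n)}_{-n+j} = P_j(n)` for all integers `n`. -/
theorem stmt10 (j : ℕ) :
    ∃ P : Polynomial ℚ, P.degree ≤ j ∧ ∀ n : ℤ, q n (-n + j) = P.eval (n : ℚ) := by
  have hB : constantCoeff (bernoulliPowerSeries ℚ) = 1 := by simp [bernoulliPowerSeries]
  set B : ℚ⟦X⟧ˣ := (isUnit_iff_constantCoeff.mpr (hB ▸ isUnit_one)).unit
  have hBval : (B : ℚ⟦X⟧) = bernoulliPowerSeries ℚ := IsUnit.unit_spec _
  have hexp : exp ℚ - 1 = X * ((B⁻¹ : ℚ⟦X⟧ˣ) : ℚ⟦X⟧) := by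
    rw [← bernoulliPowerSeries_mul_exp_sub_one, ← hBval, mul_comm, ← mul_assoc, Units.inv_mul,
      one_mul]
  have hq : (fun n : ℤ => q n (-n + j)) = fun n => coeff j (exp ℚ * ((B ^ n : ℚ⟦X⟧ˣ) : ℚ⟦X⟧)) :=
    funext fun n => by
      rw [q, E, ← map_one (HahnSeries.ofPowerSeries ℤ ℚ), ← map_sub, hexp,
        LaurentSeries.coeff_ofPowerSeries_mul_inv_zpow_X_mul, inv_inv]
  exact mem_intPolyFunLE.mp (hq ▸ coeff_mul_zpow_mem_intPolyFunLE _ B (hBval ▸ hB) j)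
end

section
/- For each j > 0, the polynomial P_j(n) giving the coefficient of x^{-n+j} in e^x/(e^x-1)^n is divisible by (n - j - 1); i.e., P_j(j+1) = 0. -/
open PowerSeries

theorem PowerSeries.coeff_X_mul_derivative_s11 {R : Type*} [CommSemiring R] (f : R⟦X⟧) (n : ℕ) :
    coeff n (X * d⁄dX R f) = n * coeff n f := by
  cases n with
  | zero => simp
  | succ n => rw [coeff_succ_X_mul, coeff_derivative, mul_comm]; push_cast; rfl

theorem PowerSeries.coeff_derivative_X_mul_mul_pow {R : Type*} [CommRing R] [IsAddTorsionFree R]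
    {v u : R⟦X⟧} (hvu : v * u = 1) {j : ℕ} (hj : j ≠ 0) :
    coeff j (d⁄dX R (X * v) * u ^ (j + 1)) = 0 := by
  set D := d⁄dX R
  have hDu : D u = -u ^ 2 * D v := by
    have h := congrArg D hvu
    rw [Derivation.leibniz, derivative_one, smul_eq_mul, smul_eq_mul] at h
    linear_combination u * h - D u * hvu
  obtain ⟨i, rfl⟩ := Nat.exists_eq_succ_of_ne_zero hj
  have hprimitive : X * D (u ^ (i + 1)) = ((i + 1 : ℕ) : R⟦X⟧) * u ^ (i + 1) -
      ((i + 1 : ℕ) : R⟦X⟧) * (D (X * v) * u ^ (i + 2)) := by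
    rw [derivative_pow, Derivation.leibniz, hDu, derivative_X]
    simp only [smul_eq_mul, Nat.add_sub_cancel]
    linear_combination ((i + 1 : ℕ) : R⟦X⟧) * u ^ (i + 1) * hvu
  have h := congrArg (coeff (i + 1)) hprimitive
  rw [coeff_X_mul_derivative_s11, map_sub, ← map_natCast (C (R := R)), coeff_C_mul,
    coeff_C_mul] at h
  have : (i + 1) • coeff (i + 1) (D (X * v) * u ^ (i + 2)) = 0 := by
    rw [nsmul_eq_mul]; push_cast at h ⊢; linear_combination h
  exact (smul_eq_zero.mp this).resolve_left (Nat.succ_ne_zero i)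

open HahnSeries in
theorem LaurentSeries.coeff_ofPowerSeries_mul_inv_X_pow_mul {K : Type*} [Field K]
    {v u : K⟦X⟧} (hvu : v * u = 1) (f : K⟦X⟧) (n k : ℕ) :
    (ofPowerSeries ℤ K f * (ofPowerSeries ℤ K (X ^ n * v))⁻¹).coeff (-n + k) =
      coeff k (f * u) := by
  have hinv :
      (ofPowerSeries ℤ K (X ^ n * v))⁻¹ = single (-n : ℤ) 1 * ofPowerSeries ℤ K u := by
    refine (eq_inv_of_mul_eq_one_right ?_).symm
    calc ofPowerSeries ℤ K (X ^ n * v) * (single (-n : ℤ) 1 * ofPowerSeries ℤ K u)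
        = (single (n : ℤ) 1 * single (-n : ℤ) 1) * ofPowerSeries ℤ K (v * u) := by
          rw [map_mul, map_mul, ofPowerSeries_X_pow]; ring
      _ = 1 := by
          rw [single_mul_single, hvu, add_neg_cancel, mul_one, single_zero_one, one_mul, map_one]
  rw [hinv, mul_left_comm, ← map_mul, add_comm, coeff_single_mul_add, one_mul,
    ofPowerSeries_apply_coeff]

/-- For `j > 0`, any polynomial `P_j` representing `n ↦ q^{(1,n)}_{-n+j}` on `ℤ` is
divisible by `n - j - 1`, i.e. `P_j(j+1) = 0`. -/
theorem stmt11 (j : ℕ) (hj : 0 < j) (P : Polynomial ℚ)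
    (hP : ∀ n : ℤ, P.eval (n : ℚ) = q n (-n + j)) :
    P.eval ((j : ℚ) + 1) = 0 := by
  obtain ⟨v, hv⟩ : X ∣ exp ℚ - 1 := by simp [X_dvd_iff]
  have hv1 : constantCoeff v = 1 := by
    simpa [coeff_exp, coeff_one, coeff_succ_X_mul] using (congrArg (coeff 1) hv).symm
  have hv0 : constantCoeff v ≠ 0 := hv1 ▸ one_ne_zero
  have hvu_pow : v ^ (j + 1) * v⁻¹ ^ (j + 1) = 1 := by
    rw [← mul_pow, PowerSeries.mul_inv_cancel v hv0, one_pow]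
  have hE : (E - 1) ^ (j + 1) = HahnSeries.ofPowerSeries ℤ ℚ (X ^ (j + 1) * v ^ (j + 1)) := by
    rw [← mul_pow, ← hv, map_pow, map_sub, map_one, E]
  have hexp : exp ℚ = d⁄dX ℚ (X * v) := by
    rw [← hv, map_sub, derivative_exp, derivative_one, sub_zero]
  have hq := LaurentSeries.coeff_ofPowerSeries_mul_inv_X_pow_mul hvu_pow (exp ℚ) (j + 1) j
  rw [← E, ← hE, hexp,
    coeff_derivative_X_mul_mul_pow (PowerSeries.mul_inv_cancel v hv0) hj.ne'] at hq
  have h := hP ((j + 1 : ℕ) : ℤ)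
  rw [q, zpow_natCast, hq] at h
  exact_mod_cast h
end

section
/- Given a formal power series f(x) = x + \sum_{n \geq 2} a_n x^n over \mathbb{C}, there exists a unique sequence (b_j)_{j \geq 1} of complex numbers such that the infinite product \cdots \exp(b_3 x^4 d/dx) \exp(b_2 x^3 d/dx) \exp(b_1 x^2 d/dx) applied to x equals f(x). (The product is well-defined on \mathbb{C}[[x]] since exp(b_j x^{j+1} d/dx) raises degrees by multiples of j, so each coefficient of the result depends on only finitely many factors.) -/
/-!
The operator `x^{n+1} d/dx` raises degrees by `n`, so `exp(b_n x^{n+1} d/dx)` fixes the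
coefficients of `x^0, …, x^n` and adds `b_n` times the coefficient of `x` to that of `x^{n+1}`.
Every partial product is `x + O(x^2)`, hence the coefficient of `x^{n+1}` in the infinite product
is `b_n` plus a function of `b_1, …, b_{n-1}`. Matching it with `f` is a triangular system
`b_n = F_n(b_1, …, b_{n-1})`, which has exactly one solution, by strong recursion.
-/

open PowerSeries

/-- The derivation `x^{j+1} d/dx` on `ℂ[[x]]`. -/
noncomputable def D (j : ℕ) (g : PowerSeries ℂ) : PowerSeries ℂ :=
  PowerSeries.X ^ (j + 1) * PowerSeries.derivativeFun g

/-- The operator `exp(b x^{j+1} d/dx)` on `ℂ[[x]]` (for `j ≥ 1` the `k`-th term of the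
exponential series raises degrees by at least `k`, so each coefficient of the result is
the finite sum below). -/
noncomputable def expD (j : ℕ) (b : ℂ) (g : PowerSeries ℂ) : PowerSeries ℂ :=
  PowerSeries.mk fun n =>
    ∑ k ∈ Finset.range (n + 1), (b ^ k / (Nat.factorial k : ℂ)) * PowerSeries.coeff n ((D j)^[k] g)

/-- The partial product `exp(b_N x^{N+1} d/dx) ⋯ exp(b_2 x^3 d/dx) exp(b_1 x^2 d/dx) ⋅ x`. -/
noncomputable def partialProd (b : ℕ → ℂ) : ℕ → PowerSeries ℂ
  | 0 => PowerSeries.X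
  | N + 1 => expD (N + 1) (b (N + 1)) (partialProd b N)

/-- The infinite product `⋯ exp(b_2 x^3 d/dx) exp(b_1 x^2 d/dx) ⋅ x`: the coefficient of
`x^n` stabilizes from stage `n` on, so the limit is given coefficientwise. -/
noncomputable def limitProd (b : ℕ → ℂ) : PowerSeries ℂ :=
  PowerSeries.mk fun n => PowerSeries.coeff n (partialProd b n)

/-- The partial product `exp(-b_1 x^2 d/dx) exp(-b_2 x^3 d/dx) ⋯ exp(-b_N x^{N+1} d/dx) ⋅ x`
(the factor with the largest index is applied to `x` first). -/
noncomputable def revPartialProd (b : ℕ → ℂ) (N : ℕ) : PowerSeries ℂ :=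
  (List.range N).foldr (fun k g => expD (k + 1) (-(b (k + 1))) g) PowerSeries.X

/-- The infinite product `exp(-b_1 x^2 d/dx) exp(-b_2 x^3 d/dx) ⋯ ⋅ x`, defined
coefficientwise since the coefficient of `x^n` stabilizes. -/
noncomputable def limitRevProd (b : ℕ → ℂ) : PowerSeries ℂ :=
  PowerSeries.mk fun n => PowerSeries.coeff n (revPartialProd b n)

/-- Composition `f(g)` of formal power series, valid when `g` has zero constant term
(then `g^k` has order at least `k`, so each coefficient is the finite sum below). -/
noncomputable def comp (f g : PowerSeries ℂ) : PowerSeries ℂ :=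
  PowerSeries.mk fun n =>
    ∑ k ∈ Finset.range (n + 1), PowerSeries.coeff k f * PowerSeries.coeff n (g ^ k)

theorem existsUnique_forall_eq_of_dependsOn_lt {α : Type*} [Nonempty α]
    (F : ℕ → (ℕ → α) → α) (hF : ∀ n b c, (∀ k < n, b k = c k) → F n b = F n c) :
    ∃! b : ℕ → α, ∀ n, b n = F n b := by
  let b : ℕ → α := fun n => Nat.strongRec
    (fun n ih => F n fun k => if h : k < n then ih k h else Classical.arbitrary α) n
  have hb : ∀ n, b n = F n b := fun n => by
    rw [show b n = _ from Nat.strongRec_eq _ n]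
    exact hF n _ _ fun k hk => by simp [hk, b]
  refine ⟨b, hb, fun c hc => funext fun n => ?_⟩
  induction n using Nat.strong_induction_on with
  | _ n ih => rw [hc, hb, hF n c b ih]

lemma coeff_D (j m : ℕ) (g : PowerSeries ℂ) :
    coeff m (D j g) = if j + 1 ≤ m then ((m - j : ℕ) : ℂ) * coeff (m - j) g else 0 := by
  rw [show D j g = X ^ (j + 1) * derivative ℂ g from rfl, coeff_X_pow_mul']
  split_ifs with h
  · rw [coeff_derivative, mul_comm]
    norm_cast
    rw [show m - (j + 1) + 1 = m - j by omega]
  · rfl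

lemma coeff_iterate_D_succ_eq_zero (j k : ℕ) (g : PowerSeries ℂ) {m : ℕ}
    (hm : m ≤ (k + 1) * j) :
    coeff m ((D j)^[k + 1] g) = 0 := by
  induction k generalizing m with
  | zero => rw [Function.iterate_one, coeff_D, if_neg (by omega)]
  | succ k ih =>
    rw [Function.iterate_succ_apply', coeff_D]
    split_ifs
    · rw [ih (by rw [Nat.succ_mul] at hm; omega), mul_zero]
    · rfl

lemma coeff_expD_of_le (j : ℕ) (b : ℂ) (g : PowerSeries ℂ) {m : ℕ} (hm : m ≤ j) :
    coeff m (expD j b g) = coeff m g := by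
  rw [expD, coeff_mk, Finset.sum_eq_single_of_mem 0 (by simp)]
  · simp
  · rintro (_ | k) _ hk
    · exact absurd rfl hk
    · rw [coeff_iterate_D_succ_eq_zero j k g (hm.trans (Nat.le_mul_of_pos_left j k.succ_pos)),
        mul_zero]

lemma coeff_expD_succ {j : ℕ} (hj : 1 ≤ j) (b : ℂ) (g : PowerSeries ℂ) :
    coeff (j + 1) (expD j b g) = coeff (j + 1) g + b * coeff 1 g := by
  rw [expD, coeff_mk, Finset.sum_range_succ', Finset.sum_range_succ',
    Finset.sum_eq_zero fun k _ => by
      rw [coeff_iterate_D_succ_eq_zero j (k + 1) g (by nlinarith), mul_zero]]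
  have hD : coeff (j + 1) (D j g) = coeff 1 g := by
    rw [coeff_D, if_pos le_rfl, Nat.add_sub_cancel_left]
    simp
  simp [hD, add_comm]

lemma coeff_partialProd_succ_of_le (b : ℕ → ℂ) (N : ℕ) {m : ℕ} (hm : m ≤ N + 1) :
    coeff m (partialProd b (N + 1)) = coeff m (partialProd b N) :=
  coeff_expD_of_le _ _ _ hm

lemma coeff_partialProd_of_le_one (b : ℕ → ℂ) (N : ℕ) {m : ℕ} (hm : m ≤ 1) :
    coeff m (partialProd b N) = coeff m X := by
  induction N with
  | zero => rfl
  | succ N ih => rw [coeff_partialProd_succ_of_le b N (by omega), ih]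

lemma coeff_limitProd_of_le_one (b : ℕ → ℂ) {m : ℕ} (hm : m ≤ 1) :
    coeff m (limitProd b) = coeff m X := by
  rw [limitProd, coeff_mk, coeff_partialProd_of_le_one b m hm]

lemma coeff_limitProd_add_two (b : ℕ → ℂ) (N : ℕ) :
    coeff (N + 2) (limitProd b) = coeff (N + 2) (partialProd b N) + b (N + 1) := by
  rw [limitProd, coeff_mk, coeff_partialProd_succ_of_le b (N + 1) le_rfl, partialProd,
    coeff_expD_succ (by omega), coeff_partialProd_of_le_one b N le_rfl, coeff_X, if_pos rfl,
    mul_one]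

lemma partialProd_congr {b c : ℕ → ℂ} {N : ℕ} (h : ∀ k < N + 1, b k = c k) :
    partialProd b N = partialProd c N := by
  induction N with
  | zero => rfl
  | succ N ih =>
    rw [partialProd, partialProd, h (N + 1) (by omega), ih fun k hk => h k (by omega)]

lemma limitProd_eq_iff {f : PowerSeries ℂ} (h0 : coeff 0 f = 0) (h1 : coeff 1 f = 1)
    (b : ℕ → ℂ) :
    limitProd b = f ↔ ∀ N, b (N + 1) = coeff (N + 2) f - coeff (N + 2) (partialProd b N) := by
  simp_rw [PowerSeries.ext_iff, eq_sub_iff_add_eq', ← coeff_limitProd_add_two]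
  refine ⟨fun h N => h (N + 2), fun h n => ?_⟩
  match n with
  | 0 => rw [coeff_limitProd_of_le_one b zero_le_one, h0, coeff_zero_X]
  | 1 => rw [coeff_limitProd_of_le_one b le_rfl, h1, coeff_one_X]
  | N + 2 => exact h N

noncomputable def forcedParam (f : PowerSeries ℂ) : ℕ → (ℕ → ℂ) → ℂ
  | 0, _ => 0
  | N + 1, b => coeff (N + 2) f - coeff (N + 2) (partialProd b N)

lemma forcedParam_congr (f : PowerSeries ℂ) (n : ℕ) {b c : ℕ → ℂ} (h : ∀ k < n, b k = c k) :
    forcedParam f n b = forcedParam f n c := by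
  cases n with
  | zero => rfl
  | succ N => rw [forcedParam, forcedParam, partialProd_congr h]

-- `b 0` does not occur in the product; it is normalized to `0` so that `b` can be unique.
/-- Given `f(x) = x + ∑_{n≥2} a_n x^n` in `ℂ[[x]]`, there is a unique sequence
`(b_j)_{j≥1}` (encoded as `b : ℕ → ℂ` with the unused value `b 0` normalized to `0`)
such that `⋯ exp(b_3 x^4 d/dx) exp(b_2 x^3 d/dx) exp(b_1 x^2 d/dx) ⋅ x = f(x)`. -/
theorem stmt12 (f : PowerSeries ℂ) (h0 : PowerSeries.coeff 0 f = 0)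
    (h1 : PowerSeries.coeff 1 f = 1) :
    ∃! b : ℕ → ℂ, b 0 = 0 ∧ limitProd b = f := by
  have h_iff (b : ℕ → ℂ) : (b 0 = 0 ∧ limitProd b = f) ↔ ∀ n, b n = forcedParam f n b := by
    rw [limitProd_eq_iff h0 h1]
    exact ⟨fun ⟨hb0, hb⟩ n => n.casesOn hb0 hb, fun hb => ⟨hb 0, fun N => hb (N + 1)⟩⟩
  simp_rw [h_iff]
  exact existsUnique_forall_eq_of_dependsOn_lt _ fun n _ _ => forcedParam_congr f n
end

section
/- Let f(x) = x + \sum_{n\geq 2} a_n x^n and let (b_j) be the unique sequence with \cdots \exp(b_2 x^3 d/dx)\exp(b_1 x^2 d/dx) \cdot x = f(x). Then the compositional inverse f^{-1}(x) (satisfying f(f^{-1}(x)) = f^{-1}(f(x)) = x) is given by the reversed product with negated coefficients: f^{-1}(x) = (\exp(-b_1 x^2 d/dx)\exp(-b_2 x^3 d/dx)\cdots) \cdot x. -/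
/-!
For `j ≥ 1` the derivation `D j = x^{j+1} d/dx` raises orders by `j`, so modulo `X^(n+1)` it
becomes a nilpotent derivation `truncD n j`, and there `expD j c` is the exponential
`IsNilpotent.exp (c • truncD n j)`. Exponentials of nilpotent derivations are multiplicative and
`exp (-a) * exp a = 1`; hence `expD j c` is an algebra endomorphism of `ℂ⟦X⟧` with inverse
`expD j (-c)`, and therefore it is substitution of `u = expD j c X`, i.e. `expD j c g = g(u)`.

So the partial products satisfy `P_N = P_{N-1}(u_N)` and `R_N = v_N(R_{N-1})`, where
`v_N = expD N (-b_N) X` is the compositional inverse of `u_N`, and `P_N(R_N) = R_N(P_N) = X`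
telescopes. As `expD N c` fixes all coefficients below `x^(N+1)`, `P_n` and `R_n` agree with the
infinite products up to `x^n`, which is all the `n`-th coefficient of a composite depends on.
-/

open PowerSeries

section Substitution

variable {R : Type*} [CommRing R]

theorem X_pow_dvd_sub_iff {n : ℕ} {f g : R⟦X⟧} :
    X ^ n ∣ f - g ↔ ∀ m < n, coeff m f = coeff m g := by
  simp only [X_pow_dvd_iff, map_sub, sub_eq_zero]

theorem eq_of_forall_X_pow_dvd_sub {f g : R⟦X⟧} (h : ∀ n, X ^ (n + 1) ∣ f - g) : f = g := by
  ext n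
  exact X_pow_dvd_sub_iff.1 (h n) n n.lt_succ_self

theorem X_pow_dvd_sub_trunc (n : ℕ) (f : R⟦X⟧) : X ^ n ∣ f - (trunc n f : R⟦X⟧) := by
  rw [X_pow_dvd_sub_iff]
  intro m hm
  rw [Polynomial.coeff_coe, coeff_trunc, if_pos hm]

theorem hasSubst_of_X_dvd {a : R⟦X⟧} (ha : X ∣ a) : HasSubst a :=
  HasSubst.of_constantCoeff_zero' (X_dvd_iff.1 ha)

theorem X_pow_dvd_map_of_X_dvd {φ : R⟦X⟧ →ₐ[R] R⟦X⟧} (hφ : X ∣ φ X) {n : ℕ} {f : R⟦X⟧}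
    (hf : X ^ n ∣ f) : X ^ n ∣ φ f := by
  obtain ⟨r, rfl⟩ := hf
  rw [map_mul, map_pow]
  exact (pow_dvd_pow_of_dvd hφ n).mul_right _

theorem X_pow_dvd_subst {a : R⟦X⟧} (ha : X ∣ a) {n : ℕ} {f : R⟦X⟧} (hf : X ^ n ∣ f) :
    X ^ n ∣ subst a f := by
  rw [← coe_substAlgHom (hasSubst_of_X_dvd ha)]
  exact X_pow_dvd_map_of_X_dvd (by rwa [coe_substAlgHom, subst_X (hasSubst_of_X_dvd ha)]) hf

theorem AlgHom.eq_subst_of_X_dvd (φ : R⟦X⟧ →ₐ[R] R⟦X⟧) (hφ : X ∣ φ X) (f : R⟦X⟧) :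
    φ f = subst (φ X) f := by
  let ψ : R⟦X⟧ →ₐ[R] R⟦X⟧ := substAlgHom (hasSubst_of_X_dvd hφ)
  have hψ : ψ X = φ X := by simp [ψ, substAlgHom_X]
  have hpoly : φ.comp (Polynomial.coeToPowerSeries.algHom R) =
      ψ.comp (Polynomial.coeToPowerSeries.algHom R) :=
    Polynomial.algHom_ext (by simp [hψ])
  rw [← coe_substAlgHom (hasSubst_of_X_dvd hφ)]
  refine eq_of_forall_X_pow_dvd_sub fun n => ?_
  have htrunc : φ (trunc (n + 1) f) = ψ (trunc (n + 1) f) := by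
    simpa using congrArg (· (trunc (n + 1) f)) hpoly
  have h := X_pow_dvd_sub_trunc (n + 1) f
  have := dvd_sub (X_pow_dvd_map_of_X_dvd hφ h) (X_pow_dvd_map_of_X_dvd (hψ ▸ hφ) h)
  rwa [map_sub, map_sub, htrunc, sub_sub_sub_cancel_right] at this

theorem subst_subst_eq_X_of_subst_eq_X {P Q u v : R⟦X⟧} (hQ : X ∣ Q) (hu : X ∣ u)
    (hv : X ∣ v) (hPQ : subst Q P = X) (huv : subst v u = X) :
    subst (subst Q v) (subst u P) = X := by
  have hQv : X ∣ subst Q v := by simpa using X_pow_dvd_subst hQ (n := 1) (by simpa using hv)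
  rw [subst_comp_subst_apply (hasSubst_of_X_dvd hu) (hasSubst_of_X_dvd hQv),
    ← subst_comp_subst_apply (hasSubst_of_X_dvd hv) (hasSubst_of_X_dvd hQ), huv,
    subst_X (hasSubst_of_X_dvd hQ), hPQ]

theorem X_pow_dvd_sub_of_succ {s : ℕ → R⟦X⟧} (hs : ∀ N, X ^ (N + 2) ∣ s (N + 1) - s N)
    {m N : ℕ} (h : m ≤ N) : X ^ (m + 1) ∣ s N - s m := by
  induction N, h using Nat.le_induction with
  | base => simp
  | succ N hmN ih =>
    rw [← sub_add_sub_cancel]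
    exact dvd_add ((pow_dvd_pow X (by omega)).trans (hs N)) ih

theorem X_pow_dvd_mk_coeff_sub {s : ℕ → R⟦X⟧} (hs : ∀ N, X ^ (N + 2) ∣ s (N + 1) - s N)
    (n : ℕ) : X ^ (n + 1) ∣ PowerSeries.mk (fun m => coeff m (s m)) - s n := by
  rw [X_pow_dvd_sub_iff]
  intro m hm
  rw [coeff_mk]
  exact (X_pow_dvd_sub_iff.1 (X_pow_dvd_sub_of_succ hs (Nat.le_of_lt_succ hm)) m
    m.lt_succ_self).symm

end Substitution

section Exponential

noncomputable def derivationD (j : ℕ) : Derivation ℂ ℂ⟦X⟧ ℂ⟦X⟧ :=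
  (X : ℂ⟦X⟧) ^ (j + 1) • derivative ℂ

theorem derivationD_apply (j : ℕ) (g : ℂ⟦X⟧) : derivationD j g = D j g := by
  rw [derivationD, Derivation.smul_apply, smul_eq_mul, D]; rfl

theorem X_pow_dvd_D (j : ℕ) (g : ℂ⟦X⟧) : X ^ (j + 1) ∣ D j g := dvd_mul_right _ _

theorem X_pow_add_dvd_D {m : ℕ} {g : ℂ⟦X⟧} (j : ℕ) (hg : X ^ m ∣ g) :
    X ^ (m + j) ∣ D j g := by
  obtain ⟨r, rfl⟩ := hg
  rw [← derivationD_apply, derivationD, Derivation.smul_apply, Derivation.leibniz,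
    Derivation.leibniz_pow, derivative_X, smul_eq_mul]
  rcases m with _ | m
  · simpa using (pow_dvd_pow X (Nat.le_succ j)).mul_right _
  · exact Dvd.intro (X * derivative ℂ r + r * ((m + 1 : ℕ) : ℂ⟦X⟧)) (by
      simp only [smul_eq_mul, nsmul_eq_mul, Nat.add_sub_cancel, mul_one]; ring)

theorem X_pow_dvd_iterate_D {j : ℕ} (hj : 0 < j) (k : ℕ) (g : ℂ⟦X⟧) :
    X ^ k ∣ (D j)^[k] g := by
  suffices X ^ (k * j) ∣ (D j)^[k] g from
    (pow_dvd_pow X (Nat.le_mul_of_pos_right k hj)).trans this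
  induction k with
  | zero => simp
  | succ k ih => rw [Function.iterate_succ_apply', add_mul, one_mul]; exact X_pow_add_dvd_D j ih

theorem coeff_expD_eq_sum {j : ℕ} (hj : 0 < j) (c : ℂ) (g : ℂ⟦X⟧) {m N : ℕ} (hm : m ≤ N) :
    coeff m (expD j c g) =
      ∑ k ∈ Finset.range (N + 1), c ^ k / k.factorial * coeff m ((D j)^[k] g) := by
  rw [expD, coeff_mk]
  refine Finset.sum_subset (Finset.range_subset_range.2 (by omega)) fun k _ hk => ?_
  rw [X_pow_dvd_iff.1 (X_pow_dvd_iterate_D hj k g) m (by simpa using hk), mul_zero]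

theorem expD_eq_self_of_D_eq_zero {j : ℕ} (c : ℂ) {g : ℂ⟦X⟧} (hg : D j g = 0) :
    expD j c g = g := by
  have hD0 : D j 0 = 0 := by rw [← derivationD_apply, map_zero]
  ext n
  rw [expD, coeff_mk, Finset.sum_range_succ']
  simp [Function.iterate_succ_apply, hg, Function.iterate_fixed hD0]

noncomputable abbrev truncIdeal (n : ℕ) : Ideal ℂ⟦X⟧ := Ideal.span {X ^ (n + 1)}

theorem mk_truncIdeal_eq_iff {n : ℕ} {f g : ℂ⟦X⟧} :
    Ideal.Quotient.mk (truncIdeal n) f = Ideal.Quotient.mk (truncIdeal n) g ↔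
      X ^ (n + 1) ∣ f - g :=
  Ideal.Quotient.eq.trans Ideal.mem_span_singleton

theorem eq_of_forall_mk_eq {f g : ℂ⟦X⟧}
    (h : ∀ n, Ideal.Quotient.mk (truncIdeal n) f = Ideal.Quotient.mk (truncIdeal n) g) : f = g :=
  eq_of_forall_X_pow_dvd_sub fun n => mk_truncIdeal_eq_iff.1 (h n)

noncomputable def truncD (n j : ℕ) : Module.End ℂ (ℂ⟦X⟧ ⧸ truncIdeal n) :=
  ((truncIdeal n).restrictScalars ℂ).liftQ
      ((Ideal.Quotient.mkₐ ℂ (truncIdeal n)).toLinearMap ∘ₗ (derivationD j).toLinearMap)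
      (fun g hg => by
        simpa [Ideal.Quotient.eq_zero_iff_mem, Ideal.mem_span_singleton, derivationD_apply] using
          (pow_dvd_pow X (Nat.le_add_right (n + 1) j)).trans
            (X_pow_add_dvd_D j (Ideal.mem_span_singleton.1 hg))) ∘ₗ
    (Submodule.Quotient.restrictScalarsEquiv ℂ (truncIdeal n)).symm.toLinearMap

theorem truncD_mk (n j : ℕ) (g : ℂ⟦X⟧) :
    truncD n j (Ideal.Quotient.mk _ g) = Ideal.Quotient.mk _ (D j g) := by
  exact rfl

theorem mk_iterate_D (n j k : ℕ) (g : ℂ⟦X⟧) :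
    Ideal.Quotient.mk _ ((D j)^[k] g) = (truncD n j)^[k] (Ideal.Quotient.mk (truncIdeal n) g) :=
  Function.Semiconj.iterate_right (fun g => (truncD_mk n j g).symm) k g

theorem truncD_pow_eq_zero {j : ℕ} (hj : 0 < j) (n : ℕ) : truncD n j ^ (n + 1) = 0 := by
  refine LinearMap.ext fun x => ?_
  obtain ⟨g, rfl⟩ := Ideal.Quotient.mk_surjective x
  rw [Module.End.pow_apply, ← mk_iterate_D, LinearMap.zero_apply, Ideal.Quotient.eq_zero_iff_mem,
    Ideal.mem_span_singleton]
  exact X_pow_dvd_iterate_D hj _ g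

theorem truncD_self_eq_zero (j : ℕ) : truncD j j = 0 := by
  refine LinearMap.ext fun x => ?_
  obtain ⟨g, rfl⟩ := Ideal.Quotient.mk_surjective x
  rw [truncD_mk, LinearMap.zero_apply, Ideal.Quotient.eq_zero_iff_mem, Ideal.mem_span_singleton]
  exact X_pow_dvd_D j g

theorem truncD_mul (n j : ℕ) (x y : ℂ⟦X⟧ ⧸ truncIdeal n) :
    truncD n j (x * y) = x * truncD n j y + truncD n j x * y := by
  obtain ⟨f, rfl⟩ := Ideal.Quotient.mk_surjective x
  obtain ⟨g, rfl⟩ := Ideal.Quotient.mk_surjective y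
  rw [← map_mul, truncD_mk, truncD_mk, truncD_mk, ← derivationD_apply, Derivation.leibniz,
    smul_eq_mul, smul_eq_mul, derivationD_apply, derivationD_apply, map_add, map_mul, map_mul,
    mul_comm (Ideal.Quotient.mk _ g)]

theorem isNilpotent_smul_truncD {j : ℕ} (hj : 0 < j) (n : ℕ) (c : ℂ) :
    IsNilpotent (c • truncD n j) :=
  ⟨n + 1, by rw [smul_pow, truncD_pow_eq_zero hj, smul_zero]⟩

open IsNilpotent in
theorem mk_expD {j : ℕ} (hj : 0 < j) (n : ℕ) (c : ℂ) (g : ℂ⟦X⟧) :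
    Ideal.Quotient.mk _ (expD j c g) =
      exp (c • truncD n j) (Ideal.Quotient.mk (truncIdeal n) g) := by
  have hpow : (c • truncD n j) ^ (n + 1) = 0 := by rw [smul_pow, truncD_pow_eq_zero hj, smul_zero]
  rw [exp_eq_sum hpow, LinearMap.sum_apply]
  have hterm : ∀ i, ((i.factorial : ℚ)⁻¹ • (c • truncD n j) ^ i) (Ideal.Quotient.mk _ g) =
      (c ^ i / i.factorial) • Ideal.Quotient.mk _ ((D j)^[i] g) := by
    intro i
    rw [LinearMap.smul_apply, smul_pow, LinearMap.smul_apply, Module.End.pow_apply, ← mk_iterate_D,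
      ← algebraMap_smul ℂ, smul_smul, div_eq_inv_mul]
    simp
  rw [Finset.sum_congr rfl fun i _ => hterm i, ← Ideal.Quotient.mkₐ_eq_mk ℂ]
  simp_rw [← map_smul, ← map_sum]
  rw [Ideal.Quotient.mkₐ_eq_mk, mk_truncIdeal_eq_iff, X_pow_dvd_sub_iff]
  intro m hm
  rw [coeff_expD_eq_sum hj c g (Nat.le_of_lt_succ hm), map_sum]
  simp only [coeff_smul, smul_eq_mul]

variable {j : ℕ} (hj : 0 < j) (c : ℂ)
include hj

theorem expD_add (f g : ℂ⟦X⟧) : expD j c (f + g) = expD j c f + expD j c g :=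
  eq_of_forall_mk_eq fun n => by simp only [map_add, mk_expD hj]

theorem expD_smul (a : ℂ) (g : ℂ⟦X⟧) : expD j c (a • g) = a • expD j c g :=
  eq_of_forall_mk_eq fun n => by
    have hmk (f : ℂ⟦X⟧) : Ideal.Quotient.mk (truncIdeal n) (a • f) = a • Ideal.Quotient.mk _ f :=
      map_smul (Ideal.Quotient.mkₐ ℂ _) a f
    rw [hmk, mk_expD hj, hmk, mk_expD hj, map_smul]

theorem expD_mul (f g : ℂ⟦X⟧) : expD j c (f * g) = expD j c f * expD j c g :=
  eq_of_forall_mk_eq fun n => by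
    rw [map_mul, mk_expD hj, mk_expD hj, mk_expD hj, map_mul]
    refine Module.End.exp_mul_of_derivation ℂ _ (c • truncD n j) (fun x y => ?_)
      (isNilpotent_smul_truncD hj n c) _ _
    rw [LinearMap.smul_apply, LinearMap.smul_apply, LinearMap.smul_apply, truncD_mul, smul_add,
      mul_smul_comm, smul_mul_assoc]

theorem expD_neg_expD (g : ℂ⟦X⟧) : expD j (-c) (expD j c g) = g :=
  eq_of_forall_mk_eq fun n => by
    rw [mk_expD hj, mk_expD hj, neg_smul c (truncD n j), ← Module.End.mul_apply,
      IsNilpotent.exp_neg_mul_exp_self (isNilpotent_smul_truncD hj n c), Module.End.one_apply]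

theorem X_pow_dvd_expD_sub (g : ℂ⟦X⟧) : X ^ (j + 1) ∣ expD j c g - g := by
  rw [← mk_truncIdeal_eq_iff, mk_expD hj, truncD_self_eq_zero, smul_zero, IsNilpotent.exp_zero,
    Module.End.one_apply]

theorem X_dvd_expD {g : ℂ⟦X⟧} (hg : X ∣ g) : X ∣ expD j c g := by
  simpa using dvd_add ((dvd_pow_self X j.succ_ne_zero).trans (X_pow_dvd_expD_sub hj c g)) hg

noncomputable def expDAlgHom : ℂ⟦X⟧ →ₐ[ℂ] ℂ⟦X⟧ :=
  AlgHom.ofLinearMap ⟨⟨expD j c, expD_add hj c⟩, expD_smul hj c⟩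
    (expD_eq_self_of_D_eq_zero c (by rw [← derivationD_apply, Derivation.map_one_eq_zero]))
    (expD_mul hj c)

theorem expD_eq_subst (g : ℂ⟦X⟧) : expD j c g = subst (expD j c X) g :=
  (expDAlgHom hj c).eq_subst_of_X_dvd (X_dvd_expD hj c (dvd_refl X)) g

theorem subst_expD_neg_X : subst (expD j (-c) X) (expD j c X) = X := by
  rw [← expD_eq_subst hj, expD_neg_expD hj]

end Exponential

section Composition

theorem comp_eq_subst {g : ℂ⟦X⟧} (hg : X ∣ g) (f : ℂ⟦X⟧) : comp f g = subst g f := by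
  ext n
  rw [comp, coeff_mk, coeff_subst' (hasSubst_of_X_dvd hg),
    finsum_eq_sum_of_support_subset (s := Finset.range (n + 1))]
  · simp only [smul_eq_mul]
  · intro d hd
    rw [Finset.coe_range, Set.mem_Iio]
    by_contra h
    exact hd (by simp only [X_pow_dvd_iff.1 (pow_dvd_pow_of_dvd hg d) n (by omega), smul_zero])

theorem coeff_comp_congr {n : ℕ} {f f' g g' : ℂ⟦X⟧} (hf : X ^ (n + 1) ∣ f - f')
    (hg : X ^ (n + 1) ∣ g - g') : coeff n (comp f g) = coeff n (comp f' g') := by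
  simp only [comp, coeff_mk]
  refine Finset.sum_congr rfl fun k hk => ?_
  rw [X_pow_dvd_sub_iff.1 hf k (Finset.mem_range.1 hk),
    X_pow_dvd_sub_iff.1 (hg.trans (sub_dvd_pow_sub_pow g g' k)) n n.lt_succ_self]

end Composition

section Products

variable (b : ℕ → ℂ)

theorem X_dvd_partialProd (N : ℕ) : X ∣ partialProd b N := by
  induction N with
  | zero => exact dvd_refl X
  | succ N ih => exact X_dvd_expD N.succ_pos _ ih

theorem X_dvd_foldr_expD {s : ℂ⟦X⟧} (hs : X ∣ s) (l : List ℕ) :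
    X ∣ l.foldr (fun k g => expD (k + 1) (-(b (k + 1))) g) s := by
  induction l with
  | nil => exact hs
  | cons k l ih => exact X_dvd_expD k.succ_pos _ ih

theorem X_dvd_revPartialProd (N : ℕ) : X ∣ revPartialProd b N :=
  X_dvd_foldr_expD b (dvd_refl X) _

theorem foldr_expD_eq_subst (N : ℕ) (s : ℂ⟦X⟧) :
    (List.range N).foldr (fun k g => expD (k + 1) (-(b (k + 1))) g) s =
      subst (revPartialProd b N) s := by
  induction N generalizing s with
  | zero => exact (X_subst s).symm
  | succ N ih =>
    have hv := X_dvd_expD N.succ_pos (-(b (N + 1))) (dvd_refl X)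
    rw [revPartialProd, List.range_succ, List.foldr_append, List.foldr_append, List.foldr_cons,
      List.foldr_nil, List.foldr_cons, List.foldr_nil, ih, ih, expD_eq_subst N.succ_pos,
      subst_comp_subst_apply (hasSubst_of_X_dvd hv) (hasSubst_of_X_dvd (X_dvd_revPartialProd b N))]

theorem revPartialProd_succ (N : ℕ) :
    revPartialProd b (N + 1) = subst (revPartialProd b N) (expD (N + 1) (-(b (N + 1))) X) := by
  rw [revPartialProd, List.range_succ, List.foldr_append, List.foldr_cons, List.foldr_nil]
  exact foldr_expD_eq_subst b N _

theorem subst_revPartialProd_partialProd (N : ℕ) :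
    subst (revPartialProd b N) (partialProd b N) = X ∧
      subst (partialProd b N) (revPartialProd b N) = X := by
  induction N with
  | zero => exact ⟨X_subst X, X_subst X⟩
  | succ N ih =>
    have hu := X_dvd_expD N.succ_pos (b (N + 1)) (dvd_refl X)
    have hv := X_dvd_expD N.succ_pos (-(b (N + 1))) (dvd_refl X)
    have huv := subst_expD_neg_X N.succ_pos (b (N + 1))
    have hvu := subst_expD_neg_X N.succ_pos (-(b (N + 1)))
    rw [neg_neg] at hvu
    rw [revPartialProd_succ, partialProd, expD_eq_subst N.succ_pos _ (partialProd b N)]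
    exact ⟨subst_subst_eq_X_of_subst_eq_X (X_dvd_revPartialProd b N) hu hv ih.1 huv,
      subst_subst_eq_X_of_subst_eq_X hu (X_dvd_revPartialProd b N) (X_dvd_partialProd b N) hvu ih.2⟩

theorem X_pow_dvd_limitProd_sub (n : ℕ) : X ^ (n + 1) ∣ limitProd b - partialProd b n :=
  X_pow_dvd_mk_coeff_sub (fun N => X_pow_dvd_expD_sub N.succ_pos _ _) n

theorem X_pow_dvd_limitRevProd_sub (n : ℕ) : X ^ (n + 1) ∣ limitRevProd b - revPartialProd b n := by
  refine X_pow_dvd_mk_coeff_sub (fun N => ?_) n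
  have hR := hasSubst_of_X_dvd (X_dvd_revPartialProd b N)
  have := X_pow_dvd_subst (X_dvd_revPartialProd b N)
    (X_pow_dvd_expD_sub N.succ_pos (-(b (N + 1))) X)
  rwa [subst_sub hR, subst_X hR, ← revPartialProd_succ] at this

end Products

theorem stmt13_general (f : PowerSeries ℂ) (b : ℕ → ℂ) (hb : limitProd b = f) :
    comp f (limitRevProd b) = PowerSeries.X ∧ comp (limitRevProd b) f = PowerSeries.X := by
  subst hb
  constructor <;> ext n
  · rw [coeff_comp_congr (X_pow_dvd_limitProd_sub b n) (X_pow_dvd_limitRevProd_sub b n),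
      comp_eq_subst (X_dvd_revPartialProd b n), (subst_revPartialProd_partialProd b n).1]
  · rw [coeff_comp_congr (X_pow_dvd_limitRevProd_sub b n) (X_pow_dvd_limitProd_sub b n),
      comp_eq_subst (X_dvd_partialProd b n), (subst_revPartialProd_partialProd b n).2]

/-- If `⋯ exp(b_2 x^3 d/dx) exp(b_1 x^2 d/dx) ⋅ x = f(x)` for
`f(x) = x + ∑_{n≥2} a_n x^n`, then the reversed product with negated coefficients,
`(exp(-b_1 x^2 d/dx) exp(-b_2 x^3 d/dx) ⋯) ⋅ x`, is the compositional inverse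
`f^{-1}` of `f`: it satisfies `f(f^{-1}(x)) = f^{-1}(f(x)) = x`. -/
theorem stmt13 (f : PowerSeries ℂ) (h0 : PowerSeries.coeff 0 f = 0)
    (h1 : PowerSeries.coeff 1 f = 1) (b : ℕ → ℂ) (hb : limitProd b = f) :
    comp f (limitRevProd b) = PowerSeries.X ∧ comp (limitRevProd b) f = PowerSeries.X :=
  stmt13_general f b hb
end

section
/- In \mathbb{C}[[x]], exp(b x^2 d/dx) \cdot x = x/(1 - b x) for any b \in \mathbb{C}. -/
open PowerSeries

/-! Since `(x² d/dx)ᵏ x = k! xᵏ⁺¹`, the exponential series collapses to `∑ bᵏ xᵏ⁺¹`, and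
`∑ bᵏ xᵏ = (1 - b x)⁻¹` is the rescaling `x ↦ b x` of `∑ xᵏ = (1 - x)⁻¹`. -/

lemma D_apply (j : ℕ) (g : ℂ⟦X⟧) : D j g = X ^ (j + 1) * d⁄dX ℂ g := rfl

lemma D_smul (j : ℕ) (c : ℂ) (g : ℂ⟦X⟧) : D j (c • g) = c • D j g := by
  rw [D_apply, D_apply, Derivation.map_smul, mul_smul_comm]

lemma D_X_pow (j n : ℕ) : D j (X ^ n) = (n : ℂ) • X ^ (n + j) := by
  rcases n with _ | n
  · simp [D_apply]
  · rw [D_apply, derivative_pow, derivative_X, Nat.add_sub_cancel, smul_eq_C_mul, map_natCast]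
    ring

lemma iterate_D_one_X (k : ℕ) : (D 1)^[k] X = (k.factorial : ℂ) • X ^ (k + 1) := by
  induction k with
  | zero => simp
  | succ k ih =>
    rw [Function.iterate_succ_apply', ih, D_smul, D_X_pow, smul_smul, Nat.factorial_succ]
    push_cast
    ring_nf

lemma expD_one_X (b : ℂ) : expD 1 b X = X * mk (b ^ ·) := by
  ext (_ | n)
  · simp [expD, iterate_D_one_X]
  · rw [coeff_succ_X_mul, coeff_mk, expD, coeff_mk, Finset.sum_eq_single n]
    · simp [iterate_D_one_X, coeff_X_pow, Nat.factorial_ne_zero]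
    · intro k _ hk
      simp [iterate_D_one_X, coeff_X_pow, Ne.symm hk]
    · simp

lemma mk_pow_eq_inv_one_sub_C_mul_X {k : Type*} [Field k] (b : k) :
    mk (b ^ ·) = (1 - C b * X)⁻¹ := by
  rw [eq_inv_iff_mul_eq_one (by simp)]
  simpa [rescale_mk] using congrArg (rescale b) (mk_one_mul_one_sub_eq_one k)

/-- `exp(b x^2 d/dx) ⋅ x = x/(1 - b x)` in `ℂ[[x]]`. -/
theorem stmt15 (b : ℂ) :
    expD 1 b PowerSeries.X
      = PowerSeries.X * (1 - PowerSeries.C b * PowerSeries.X)⁻¹ := by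
  rw [expD_one_X, mk_pow_eq_inv_one_sub_C_mul_X]
end
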